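/- arXiv:2502.17867 — 2 statements merged into one kernel-verified Lean document; each statement's English description precedes it below -/
import Mathlib

section
/- Let F be μ-strongly monotone and θ-Lipschitz on U, let x* ∈ U solve the variational inequality, and let 0 < δ₁ < 2μ/θ². Then for all x ∈ U with x̄ = x − x*, the inequality ‖x̄‖·‖x̄ − δ₁(F(x) − F(x*))‖ − ‖x̄‖² ≤ −δ₁(2μ − δ₁θ²)/(2 + δ₁θ) · ‖x̄‖² holds. -/
/-- The merged-term estimate in the Lyapunov analysis. -/
theorem stmt_5 {m : ℕ} (U : Set (EuclideanSpace ℝ (Fin m))) (hconv : Convex ℝ U)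
    (F : EuclideanSpace ℝ (Fin m) → EuclideanSpace ℝ (Fin m))
    (μ θ : ℝ) (hμ : 0 < μ) (hθ : 0 < θ)
    (hmono : ∀ x ∈ U, ∀ x' ∈ U, μ * ‖x - x'‖ ^ 2 ≤ (inner ℝ (x - x') (F x - F x') : ℝ))
    (hLip : ∀ x ∈ U, ∀ x' ∈ U, ‖F x - F x'‖ ≤ θ * ‖x - x'‖)
    (xs : EuclideanSpace ℝ (Fin m)) (hxs : xs ∈ U)
    (hVI : ∀ x ∈ U, (0 : ℝ) ≤ inner ℝ (x - xs) (F xs))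
    (δ₁ : ℝ) (hδ₁ : 0 < δ₁) (hδ₁' : δ₁ < 2 * μ / θ ^ 2) :
    ∀ x ∈ U,
      ‖x - xs‖ * ‖(x - xs) - δ₁ • (F x - F xs)‖ - ‖x - xs‖ ^ 2 ≤
        -(δ₁ * (2 * μ - δ₁ * θ ^ 2) / (2 + δ₁ * θ)) * ‖x - xs‖ ^ 2 := by
  intro x hx
  set v := x - xs with hv
  set w := v - δ₁ • (F x - F xs) with hw
  set a := ‖v‖ with ha
  set b := ‖w‖ with hb
  have ha0 : 0 ≤ a := norm_nonneg _
  have hb0 : 0 ≤ b := norm_nonneg _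
  have hεpos : 0 < δ₁ * (2 * μ - δ₁ * θ ^ 2) := by
    apply mul_pos hδ₁
    have : δ₁ * θ ^ 2 < 2 * μ := by
      rw [← lt_div_iff₀ (by positivity)] ; exact hδ₁'
    linarith
  have hFn : ‖F x - F xs‖ ≤ θ * a := hLip x hx xs hxs
  have hFn0 : 0 ≤ ‖F x - F xs‖ := norm_nonneg _
  have hmono' : μ * a ^ 2 ≤ (inner ℝ v (F x - F xs) : ℝ) := hmono x hx xs hxs
  -- expansion of b^2
  have hb2 : b ^ 2 = a ^ 2 - 2 * δ₁ * (inner ℝ v (F x - F xs) : ℝ)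
      + δ₁ ^ 2 * ‖F x - F xs‖ ^ 2 := by
    rw [hb, hw, norm_sub_sq_real]
    rw [real_inner_smul_right, norm_smul, mul_pow]
    simp [abs_of_pos hδ₁]
    ring
  have hkey : b ^ 2 ≤ (1 - δ₁ * (2 * μ - δ₁ * θ ^ 2)) * a ^ 2 := by
    have hF2 : ‖F x - F xs‖ ^ 2 ≤ (θ * a) ^ 2 := by
      apply pow_le_pow_left₀ hFn0 hFn
    nlinarith [hmono', hF2, sq_nonneg δ₁]
  have hba : b ≤ a := by nlinarith
  have htri : b ≤ (1 + δ₁ * θ) * a := by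
    calc b ≤ ‖v‖ + ‖δ₁ • (F x - F xs)‖ := norm_sub_le _ _
    _ = a + δ₁ * ‖F x - F xs‖ := by rw [norm_smul, Real.norm_eq_abs, abs_of_pos hδ₁]
    _ ≤ a + δ₁ * (θ * a) := by nlinarith
    _ = (1 + δ₁ * θ) * a := by ring
  have hd : (0:ℝ) < 2 + δ₁ * θ := by positivity
  rw [show -(δ₁ * (2 * μ - δ₁ * θ ^ 2) / (2 + δ₁ * θ)) * a ^ 2
      = (-(δ₁ * (2 * μ - δ₁ * θ ^ 2)) * a ^ 2) / (2 + δ₁ * θ) by ring,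
    le_div_iff₀ hd]
  have hprod : (a + b) * (a - b) ≤ ((2 + δ₁ * θ) * a) * (a - b) := by
    apply mul_le_mul_of_nonneg_right _ (by linarith)
    nlinarith
  nlinarith [hkey, hprod]
end

section
/- Let U ⊆ R^m be a nonempty closed convex set and suppose x(t) is the solution of ẋ = δ₂(P_U(x − δ₁G(x, t)) − x) with G continuous and globally Lipschitz in x. If x(0) ∈ U then x(t) ∈ U for all t ≥ 0. -/
open Metric Set Filter
open scoped Topology

/-- Forward invariance of U under the projected dynamics ẋ = δ₂(P_U(x − δ₁G(x,t)) − x). -/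
theorem stmt_15 {m : ℕ} (U : Set (EuclideanSpace ℝ (Fin m)))
    (hne : U.Nonempty) (hcl : IsClosed U) (hconv : Convex ℝ U)
    (P : EuclideanSpace ℝ (Fin m) → EuclideanSpace ℝ (Fin m))
    (hP : ∀ y, P y ∈ U ∧ ∀ z ∈ U, ‖P y - y‖ ≤ ‖z - y‖)
    (G : EuclideanSpace ℝ (Fin m) → ℝ → EuclideanSpace ℝ (Fin m))
    (hGcont : Continuous fun p : EuclideanSpace ℝ (Fin m) × ℝ => G p.1 p.2)
    (K : NNReal) (hGLip : ∀ t, LipschitzWith K fun y => G y t)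
    (δ₁ δ₂ : ℝ) (hδ₁ : 0 < δ₁) (hδ₂ : 0 < δ₂)
    (x : ℝ → EuclideanSpace ℝ (Fin m))
    (hx : ∀ t, HasDerivAt x (δ₂ • (P (x t - δ₁ • G (x t) t) - x t)) t)
    (hx0 : x 0 ∈ U) :
    ∀ t ≥ (0 : ℝ), x t ∈ U := by
  -- dist of y to U is realized by P y
  have hdist : ∀ y, infDist y U = dist y (P y) := by
    intro y
    refine le_antisymm (infDist_le_dist_of_mem (hP y).1) (le_of_not_gt fun h => ?_)
    obtain ⟨z, hz, hzlt⟩ := (infDist_lt_iff hne).1 h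
    simp only [dist_eq_norm] at hzlt
    rw [norm_sub_rev y (P y), norm_sub_rev y z] at hzlt
    exact absurd ((hP y).2 z hz) (not_le.2 hzlt)
  -- key geometric estimate
  have key : ∀ (y p : EuclideanSpace ℝ (Fin m)), p ∈ U → ∀ c : ℝ, 0 ≤ c → c ≤ 1 →
      infDist (y + c • (p - y)) U ≤ (1 - c) * infDist y U := by
    intro y p hp c hc0 hc1
    have hq : P y ∈ U := (hP y).1
    have hw : (1 - c) • (P y) + c • p ∈ U :=
      hconv hq hp (by linarith) hc0 (by ring)
    calc infDist (y + c • (p - y)) U ≤ dist (y + c • (p - y)) ((1 - c) • (P y) + c • p) :=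
          infDist_le_dist_of_mem hw
      _ = ‖(1 - c) • (y - P y)‖ := by
          rw [dist_eq_norm]
          congr 1
          module
      _ = (1 - c) * infDist y U := by
          rw [norm_smul, Real.norm_eq_abs, abs_of_nonneg (by linarith), hdist,
            dist_eq_norm]
  -- f is the distance of x t to U
  set f : ℝ → ℝ := fun t => infDist (x t) U with hf
  have hfc : Continuous f :=
    (continuous_infDist_pt U).comp (continuous_iff_continuousAt.2 fun t => (hx t).continuousAt)
  have hf0 : f 0 = 0 := infDist_zero_of_mem hx0
  have hfnn : ∀ t, 0 ≤ f t := fun t => infDist_nonneg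
  -- the liminf slope condition
  have hslope : ∀ t, ∀ r, -δ₂ * f t < r →
      ∃ᶠ z in 𝓝[>] t, (z - t)⁻¹ * (f z - f t) < r := by
    intro t r hr
    set p := P (x t - δ₁ • G (x t) t) with hpdef
    have hpU : p ∈ U := (hP _).1
    set v := δ₂ • (p - x t) with hv
    have hd := hx t
    set ε : ℝ := (r - (-δ₂ * f t)) / 2 with hε
    have hεpos : 0 < ε := by simp only [hε]; linarith
    -- from HasDerivAt, eventually ‖x z - x t - (z - t) • v‖ ≤ ε * |z - t|
    have hlo : (fun z => x z - x t - (z - t) • v) =o[𝓝 t] fun z => z - t :=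
      hd.isLittleO
    have hev : ∀ᶠ z in 𝓝 t, ‖x z - x t - (z - t) • v‖ ≤ ε * ‖z - t‖ :=
      hlo.bound hεpos
    have hev2 : ∀ᶠ z in 𝓝[>] t, ‖x z - x t - (z - t) • v‖ ≤ ε * ‖z - t‖ :=
      hev.filter_mono nhdsWithin_le_nhds
    have hsmall : ∀ᶠ z in 𝓝[>] t, z - t < δ₂⁻¹ := by
      have hT : Tendsto (fun z : ℝ => z - t) (𝓝 t) (𝓝 (t - t)) :=
        (continuous_sub_right t).tendsto t
      rw [sub_self] at hT
      exact (hT.eventually_lt_const (by positivity)).filter_mono nhdsWithin_le_nhds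
    refine ((hev2.and (hsmall.and self_mem_nhdsWithin)).mono ?_).frequently
    rintro z ⟨hz1, hz2, (hz3 : t < z)⟩
    have hzt : 0 < z - t := by linarith
    have hc0 : 0 ≤ (z - t) * δ₂ := by positivity
    have hc1 : (z - t) * δ₂ ≤ 1 := by
      calc (z - t) * δ₂ ≤ δ₂⁻¹ * δ₂ := by nlinarith
        _ = 1 := inv_mul_cancel₀ hδ₂.ne'
    have hpt : x t + ((z - t) * δ₂) • (p - x t) = x t + (z - t) • v := by
      rw [hv, smul_smul]
    have h1 : f z ≤ infDist (x t + (z - t) • v) U + ‖x z - (x t + (z - t) • v)‖ := by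
      have := infDist_le_infDist_add_dist (x := x z) (y := x t + (z - t) • v) (s := U)
      rw [dist_eq_norm] at this
      exact this
    have h2 : infDist (x t + (z - t) • v) U ≤ (1 - (z - t) * δ₂) * f t := by
      rw [← hpt]; exact key (x t) p hpU _ hc0 hc1
    have h3 : ‖x z - (x t + (z - t) • v)‖ ≤ ε * (z - t) := by
      have : x z - (x t + (z - t) • v) = x z - x t - (z - t) • v := by abel
      rw [this]
      calc ‖x z - x t - (z - t) • v‖ ≤ ε * ‖z - t‖ := hz1
        _ = ε * (z - t) := by rw [Real.norm_eq_abs, abs_of_pos hzt]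
    have hfz : f z - f t ≤ (z - t) * (-δ₂ * f t + ε) := by
      have := h1.trans (add_le_add h2 h3)
      nlinarith [hfnn t]
    have hs1 : (z - t)⁻¹ * (f z - f t) ≤ -δ₂ * f t + ε := by
      rw [inv_mul_le_iff₀ hzt]
      nlinarith [hfz]
    have hs2 : -δ₂ * f t + ε < r := by simp only [hε]; linarith
    linarith
  -- apply Gronwall on [0, b] for each b
  intro b hb
  have hgron := le_gronwallBound_of_liminf_deriv_right_le
    (f := f) (f' := fun t => -δ₂ * f t) (δ := 0) (K := 0) (ε := 0) (a := 0) (b := b)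
    hfc.continuousOn
    (fun t _ r hr => hslope t r hr)
    (le_of_eq hf0)
    (fun t _ => by
      have := hfnn t
      have : -δ₂ * f t ≤ 0 := mul_nonpos_of_nonpos_of_nonneg (by linarith) this
      simpa using this)
  have hfb : f b ≤ 0 := by
    have := hgron b ⟨hb, le_refl b⟩
    simpa [gronwallBound] using this
  have : f b = 0 := le_antisymm hfb (hfnn b)
  exact (hcl.mem_iff_infDist_zero hne).2 this
end
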